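/- arXiv:0910.2069 — 2 statements merged into one kernel-verified Lean document; each statement's English description precedes it below -/
import Mathlib

section
/- Let G : ℝ → ℝ be continuous and suppose that for all u, t₁, t₂ ∈ ℝ one has (G(u + t₁) − G(u)) · (G(u + t₂) − G(u)) ≥ 0. Then G takes at most two distinct values; since G is continuous on the connected set ℝ, G is in fact constant. -/
theorem stmt_5 (G : ℝ → ℝ) (hG : Continuous G)
    (h : ∀ u t₁ t₂ : ℝ, 0 ≤ (G (u + t₁) - G u) * (G (u + t₂) - G u)) :
    ∀ u v : ℝ, G u = G v := by
  intro u v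
  by_contra hne
  set c := (G u + G v) / 2 with hc
  have hcmem : c ∈ Set.Icc (G u) (G v) ∪ Set.Icc (G v) (G u) := by
    rcases le_total (G u) (G v) with hle | hle
    · left; constructor <;> simp [hc] <;> linarith
    · right; constructor <;> simp [hc] <;> linarith
  have hw : ∃ w, G w = c := by
    rcases hcmem with hm | hm
    · exact intermediate_value_univ u v hG hm
    · exact intermediate_value_univ v u hG hm
  obtain ⟨w, hwc⟩ := hw
  have := h w (u - w) (v - w)
  simp only [add_sub_cancel] at this
  rw [hwc] at this
  have hne' : G u - G v ≠ 0 := sub_ne_zero.mpr hne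
  have hpos : 0 < (G u - G v) ^ 2 := by positivity
  nlinarith [hpos, hc]
end

section
/- Let 0 < α < 2 (or more generally α > 0), (S₁, μ₁), (S₂, μ₂) σ-finite measure spaces, and U : L^α_+(S₁, μ₁) → L^α_+(S₂, μ₂) a max-linear isometry, i.e. U(a₁f₁ ∨ a₂f₂) = a₁Uf₁ ∨ a₂Uf₂ μ₂-a.e. for all f₁, f₂ ∈ L^α_+(S₁,μ₁), a₁, a₂ ≥ 0, and ∫ (Uf)^α dμ₂ = ∫ f^α dμ₁ for all f. Then U maps functions with disjoint supports to functions with a.e.-disjoint supports: if f·g = 0 μ₁-a.e., then (Uf)·(Ug) = 0 μ₂-a.e. -/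
open MeasureTheory
open scoped NNReal ENNReal

/-!
For `a, b ≥ 0` one has `(a ⊔ b)^α + (a ⊓ b)^α = a^α + b^α`, and `(a ⊓ b)^α = 0` iff `a b = 0`.
So disjointly supported `f, g` satisfy `∫ f^α + ∫ g^α ≤ ∫ (f ⊔ g)^α`, and max-linearity together
with the isometry property transfers this inequality to `U f, U g`. Conversely, integrating the
identity for `u = U f`, `v = U g`, the inequality forces `∫ (u ⊓ v)^α = 0` as soon as everything
is finite, i.e. `u v = 0` a.e.
-/

theorem map_sup_add_map_inf {α β : Type*} [LinearOrder α] [AddCommMagma β] (φ : α → β) (a b : α) :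
    φ (a ⊔ b) + φ (a ⊓ b) = φ a + φ b := by
  rcases le_total a b with h | h
  · rw [sup_eq_right.mpr h, inf_eq_left.mpr h, add_comm]
  · rw [sup_eq_left.mpr h, inf_eq_right.mpr h]

namespace NNReal

theorem coe_inf_rpow_eq_zero_iff {a b : ℝ≥0} {p : ℝ} (hp : 0 < p) :
    ((a ⊓ b : ℝ≥0) : ℝ≥0∞) ^ p = 0 ↔ a * b = 0 := by
  rw [ENNReal.rpow_eq_zero_iff_of_pos hp, ENNReal.coe_eq_zero, mul_eq_zero]
  exact min_eq_bot

theorem coe_sup_rpow_of_mul_eq_zero {a b : ℝ≥0} {p : ℝ} (hp : 0 < p) (hab : a * b = 0) :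
    ((a ⊔ b : ℝ≥0) : ℝ≥0∞) ^ p = (a : ℝ≥0∞) ^ p + (b : ℝ≥0∞) ^ p := by
  rw [← map_sup_add_map_inf (fun c : ℝ≥0 => (c : ℝ≥0∞) ^ p), (coe_inf_rpow_eq_zero_iff hp).mpr hab,
    add_zero]

end NNReal

section

variable {S : Type*} [MeasurableSpace S] {μ : Measure S} {p : ℝ} {u v : S → ℝ≥0}

theorem add_lintegral_rpow_le_lintegral_rpow_sup (hp : 0 < p) (huv : ∀ᵐ s ∂μ, u s * v s = 0) :
    ∫⁻ s, (u s : ℝ≥0∞) ^ p ∂μ + ∫⁻ s, (v s : ℝ≥0∞) ^ p ∂μ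
      ≤ ∫⁻ s, ((u s ⊔ v s : ℝ≥0) : ℝ≥0∞) ^ p ∂μ :=
  (le_lintegral_add _ _).trans <| lintegral_mono_ae <| huv.mono fun _ hs =>
    (NNReal.coe_sup_rpow_of_mul_eq_zero hp hs).ge

theorem lintegral_rpow_sup_add_lintegral_rpow_inf (hu : Measurable u) (hv : Measurable v) :
    ∫⁻ s, ((u s ⊔ v s : ℝ≥0) : ℝ≥0∞) ^ p ∂μ + ∫⁻ s, ((u s ⊓ v s : ℝ≥0) : ℝ≥0∞) ^ p ∂μ
      = ∫⁻ s, (u s : ℝ≥0∞) ^ p ∂μ + ∫⁻ s, (v s : ℝ≥0∞) ^ p ∂μ := by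
  rw [← lintegral_add_left (by fun_prop), ← lintegral_add_left (by fun_prop)]
  exact lintegral_congr fun s => map_sup_add_map_inf (fun c : ℝ≥0 => (c : ℝ≥0∞) ^ p) (u s) (v s)

theorem ae_mul_eq_zero_of_add_lintegral_rpow_le (hu : Measurable u) (hv : Measurable v)
    (hp : 0 < p) (hfin : ∫⁻ s, (u s : ℝ≥0∞) ^ p ∂μ + ∫⁻ s, (v s : ℝ≥0∞) ^ p ∂μ ≠ ∞)
    (hle : ∫⁻ s, (u s : ℝ≥0∞) ^ p ∂μ + ∫⁻ s, (v s : ℝ≥0∞) ^ p ∂μ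
      ≤ ∫⁻ s, ((u s ⊔ v s : ℝ≥0) : ℝ≥0∞) ^ p ∂μ) :
    ∀ᵐ s ∂μ, u s * v s = 0 := by
  have hsum := lintegral_rpow_sup_add_lintegral_rpow_inf (μ := μ) (p := p) hu hv
  have hsup : ∫⁻ s, ((u s ⊔ v s : ℝ≥0) : ℝ≥0∞) ^ p ∂μ
      = ∫⁻ s, (u s : ℝ≥0∞) ^ p ∂μ + ∫⁻ s, (v s : ℝ≥0∞) ^ p ∂μ :=
    le_antisymm (hsum ▸ le_self_add) hle
  have hinf : ∫⁻ s, ((u s ⊓ v s : ℝ≥0) : ℝ≥0∞) ^ p ∂μ = 0 := by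
    rw [hsup] at hsum
    exact (ENNReal.add_right_inj hfin).mp (hsum.trans (add_zero _).symm)
  rw [lintegral_eq_zero_iff (by fun_prop)] at hinf
  exact hinf.mono fun s hs => (NNReal.coe_inf_rpow_eq_zero_iff hp).mp hs

end

theorem stmt_18_general {S₁ S₂ : Type*} [MeasurableSpace S₁] [MeasurableSpace S₂]
    (μ₁ : Measure S₁) (μ₂ : Measure S₂)
    (α : ℝ) (hα : 0 < α)
    (U : (S₁ → ℝ≥0) → (S₂ → ℝ≥0))
    (hmaxlin : ∀ (f₁ f₂ : S₁ → ℝ≥0) (a₁ a₂ : ℝ≥0),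
      U (fun s => a₁ * f₁ s ⊔ a₂ * f₂ s) =ᵐ[μ₂] fun s => a₁ * U f₁ s ⊔ a₂ * U f₂ s)
    (hiso : ∀ f : S₁ → ℝ≥0, ∫⁻ s, (U f s : ℝ≥0∞) ^ α ∂μ₂ = ∫⁻ s, (f s : ℝ≥0∞) ^ α ∂μ₁)
    (f g : S₁ → ℝ≥0)
    (hUf : Measurable (U f)) (hUg : Measurable (U g))
    (hfL : ∫⁻ s, (f s : ℝ≥0∞) ^ α ∂μ₁ < ⊤) (hgL : ∫⁻ s, (g s : ℝ≥0∞) ^ α ∂μ₁ < ⊤)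
    (hdisj : ∀ᵐ s ∂μ₁, f s * g s = 0) :
    ∀ᵐ s ∂μ₂, U f s * U g s = 0 := by
  have hUsup : ∫⁻ s, ((U f s ⊔ U g s : ℝ≥0) : ℝ≥0∞) ^ α ∂μ₂
      = ∫⁻ s, ((f s ⊔ g s : ℝ≥0) : ℝ≥0∞) ^ α ∂μ₁ := by
    rw [← hiso]
    refine lintegral_congr_ae ?_
    filter_upwards [hmaxlin f g 1 1] with s hs
    simp only [one_mul] at hs
    rw [hs]
  refine ae_mul_eq_zero_of_add_lintegral_rpow_le hUf hUg hα ?_ ?_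
  · rw [hiso, hiso]
    exact ENNReal.add_ne_top.mpr ⟨hfL.ne, hgL.ne⟩
  · rw [hiso, hiso, hUsup]
    exact add_lintegral_rpow_le_lintegral_rpow_sup hα hdisj

theorem stmt_18 {S₁ S₂ : Type*} [MeasurableSpace S₁] [MeasurableSpace S₂]
    (μ₁ : Measure S₁) (μ₂ : Measure S₂) [SigmaFinite μ₁] [SigmaFinite μ₂]
    (α : ℝ) (hα : 0 < α)
    (U : (S₁ → ℝ≥0) → (S₂ → ℝ≥0))
    (hmaxlin : ∀ (f₁ f₂ : S₁ → ℝ≥0) (a₁ a₂ : ℝ≥0),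
      U (fun s => a₁ * f₁ s ⊔ a₂ * f₂ s) =ᵐ[μ₂] fun s => a₁ * U f₁ s ⊔ a₂ * U f₂ s)
    (hiso : ∀ f : S₁ → ℝ≥0, ∫⁻ s, (U f s : ℝ≥0∞) ^ α ∂μ₂ = ∫⁻ s, (f s : ℝ≥0∞) ^ α ∂μ₁)
    (f g : S₁ → ℝ≥0) (hf : Measurable f) (hg : Measurable g)
    (hUf : Measurable (U f)) (hUg : Measurable (U g))
    (hfL : ∫⁻ s, (f s : ℝ≥0∞) ^ α ∂μ₁ < ⊤) (hgL : ∫⁻ s, (g s : ℝ≥0∞) ^ α ∂μ₁ < ⊤)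
    (hdisj : ∀ᵐ s ∂μ₁, f s * g s = 0) :
    ∀ᵐ s ∂μ₂, U f s * U g s = 0 :=
  stmt_18_general μ₁ μ₂ α hα U hmaxlin hiso f g hUf hUg hfL hgL hdisj
end
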